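/- Let m > 0 be real, let φ_∞ ∈ ℝ, and let c : ℕ → ℝ be a sequence such that all three series Σ_{k≥0} k! c_k/(m)_{k+1}, Σ_{k≥0} k! c_k/(m+1)_{k+1}, and Σ_{k≥1} k! c_{k−1}/(m)_{k+1} are summable. Then the shifted inverse factorial series can be re-expanded at base point m: φ_∞ + Σ_{k=0}^{∞} k! c_k/(m+1)_{k+1} = φ_∞ + c_0/m + Σ_{k=1}^{∞} (k!/(m)_{k+1})(c_k − c_{k−1}). -/

import Mathlib

/-- The Pochhammer symbol `(x)_j = x(x+1)⋯(x+j−1)`, with `(x)_0 = 1`. -/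
noncomputable def poch (x : ℝ) (j : ℕ) : ℝ := ∏ i ∈ Finset.range j, (x + i)

lemma poch_pos {x : ℝ} (hx : 0 < x) (j : ℕ) : 0 < poch x j := by
  apply Finset.prod_pos
  intro i _
  positivity

lemma poch_succ (x : ℝ) (j : ℕ) : poch x (j + 1) = poch x j * (x + j) := by
  simp [poch, Finset.prod_range_succ]

lemma poch_shift (x : ℝ) (j : ℕ) : poch x (j + 1) = x * poch (x + 1) j := by
  rw [poch, poch, Finset.prod_range_succ']
  simp only [Nat.cast_add, Nat.cast_one, Nat.cast_zero, add_zero]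
  rw [mul_comm]
  congr 1
  apply Finset.prod_congr rfl
  intro i _
  ring

lemma key_identity {m : ℝ} (hm : 0 < m) (k : ℕ) :
    (Nat.factorial k : ℝ) / poch (m + 1) (k + 1)
      = (Nat.factorial k : ℝ) / poch m (k + 1) - (Nat.factorial (k + 1) : ℝ) / poch m (k + 2) := by
  have hP : 0 < poch (m + 1) k := poch_pos (by linarith) k
  have h1 : poch m (k + 1) = m * poch (m + 1) k := poch_shift m k
  have h2 : poch (m + 1) (k + 1) = poch (m + 1) k * (m + 1 + k) := poch_succ (m + 1) k
  have h3 : poch m (k + 2) = m * (poch (m + 1) k * (m + 1 + k)) := by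
    rw [poch_shift m (k + 1), h2]
  rw [h1, h2, h3, Nat.factorial_succ]
  have hB : (0:ℝ) < m + 1 + k := by positivity
  field_simp
  push_cast
  ring

/-- Re-expansion of a shifted inverse factorial series at the base point `m`:
`φ_∞ + Σ_{k=0}^{∞} k! c_k/(m+1)_{k+1} = φ_∞ + c_0/m + Σ_{k=1}^{∞} (k!/(m)_{k+1})(c_k − c_{k−1})`,
provided the three series involved are summable. (The series over `k ≥ 1` are indexed
here by `k ∈ ℕ` via the shift `k ↦ k+1`.) -/
theorem shifted_inverse_factorial_series_reexpansion
    (m : ℝ) (hm : 0 < m) (φinf : ℝ) (c : ℕ → ℝ)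
    (h1 : Summable fun k : ℕ => (Nat.factorial k : ℝ) * c k / poch m (k + 1))
    (h2 : Summable fun k : ℕ => (Nat.factorial k : ℝ) * c k / poch (m + 1) (k + 1))
    (h3 : Summable fun k : ℕ => (Nat.factorial (k + 1) : ℝ) * c k / poch m (k + 2)) :
    φinf + ∑' k : ℕ, (Nat.factorial k : ℝ) * c k / poch (m + 1) (k + 1)
      = φinf + c 0 / m
          + ∑' k : ℕ, (Nat.factorial (k + 1) : ℝ) / poch m (k + 2) * (c (k + 1) - c k) := by
  -- Shifted version of h1
  have h1' : Summable fun k : ℕ => (Nat.factorial (k + 1) : ℝ) * c (k + 1) / poch m (k + 2) := by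
    have := (summable_nat_add_iff 1).mpr h1
    simpa using this
  -- pointwise rewrite of LHS summand
  have hptL : ∀ k : ℕ, (Nat.factorial k : ℝ) * c k / poch (m + 1) (k + 1)
      = (Nat.factorial k : ℝ) * c k / poch m (k + 1)
        - (Nat.factorial (k + 1) : ℝ) * c k / poch m (k + 2) := by
    intro k
    have := key_identity hm k
    have e1 : (Nat.factorial k : ℝ) * c k / poch (m + 1) (k + 1)
        = (Nat.factorial k : ℝ) / poch (m + 1) (k + 1) * c k := by ring
    rw [e1, this]
    ring
  have hptR : ∀ k : ℕ, (Nat.factorial (k + 1) : ℝ) / poch m (k + 2) * (c (k + 1) - c k)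
      = (Nat.factorial (k + 1) : ℝ) * c (k + 1) / poch m (k + 2)
        - (Nat.factorial (k + 1) : ℝ) * c k / poch m (k + 2) := by
    intro k; ring
  have hL : (∑' k : ℕ, (Nat.factorial k : ℝ) * c k / poch (m + 1) (k + 1))
      = (∑' k : ℕ, (Nat.factorial k : ℝ) * c k / poch m (k + 1))
        - (∑' k : ℕ, (Nat.factorial (k + 1) : ℝ) * c k / poch m (k + 2)) := by
    rw [← Summable.tsum_sub h1 h3]
    exact tsum_congr hptL
  have hR : (∑' k : ℕ, (Nat.factorial (k + 1) : ℝ) / poch m (k + 2) * (c (k + 1) - c k))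
      = (∑' k : ℕ, (Nat.factorial (k + 1) : ℝ) * c (k + 1) / poch m (k + 2))
        - (∑' k : ℕ, (Nat.factorial (k + 1) : ℝ) * c k / poch m (k + 2)) := by
    rw [← Summable.tsum_sub h1' h3]
    exact tsum_congr hptR
  have hshift : (∑' k : ℕ, (Nat.factorial k : ℝ) * c k / poch m (k + 1))
      = c 0 / m + ∑' k : ℕ, (Nat.factorial (k + 1) : ℝ) * c (k + 1) / poch m (k + 2) := by
    rw [Summable.tsum_eq_zero_add h1]
    congr 1
    simp [poch_succ, poch]
  rw [hL, hR, hshift]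
  ring
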